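/- Let $0<\delta\le\frac12$ and $|x|\ge 1$ in $\mathbb{R}^n$ with $1+2\delta_1\in[0,n)$. If $r\ge |x|/2$, then $\int_{B_r(x)} |y|^{-1+2\delta}\langle y\rangle^{-2\delta-2\delta_1}\,dy \le C\, r^n\, |x|^{-1-2\delta_1}$ for a constant $C$ depending only on $n,\delta,\delta_1$, where the integral is split as $\int_{B_1(0)}|y|^{-1+2\delta}dy + \int_{B_r(x)\setminus B_1(0)} |y|^{-1-2\delta_1}dy$ and both pieces are bounded by $Cr^n|x|^{-1-2\delta_1}$. -/

import Mathlib

/-! Near the origin the bracket factor `⟨y⟩^(-2δ-2δ₁)` is bounded, and away from it it is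
comparable to `|y|^(-2δ-2δ₁)`, so everything reduces to the two model integrals. Both are
controlled by scaling, `∫_{B_R(0)} |y|^p = R^(n+p) ∫_{B_1(0)} |y|^p` (finite for `p > -n`).
The first, over `B_1(0)`, is a constant, and `1 ≤ (2r)^n |x|^(-1-2δ₁)` because `|x| ≤ 2r`,
`|x| ≥ 1` and `n - 1 - 2δ₁ ≥ 0`. The second is at most the integral over `B_{3r}(0) ⊇ B_r(x)`,
a constant times `r^(n-1-2δ₁) ≤ 2^(1+2δ₁) r^n |x|^(-1-2δ₁)`, the exponent being non-positive. -/

open MeasureTheory Metric Set Module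

lemma one_add_sq_rpow_le {t : ℝ} (ht : 0 ≤ t) (s : ℝ) :
    (1 + t ^ 2) ^ s ≤ max 1 (2 ^ s) * max 1 t ^ (2 * s) := by
  set m := max 1 t with hm
  have hm1 : 1 ≤ m := le_max_left 1 t
  have htm : t ≤ m := le_max_right 1 t
  have hlow : m ^ 2 ≤ 1 + t ^ 2 := by
    rcases max_choice 1 t with h | h <;> rw [hm, h] <;> nlinarith
  have hupp : 1 + t ^ 2 ≤ 2 * m ^ 2 := by nlinarith
  have hpow : (m ^ 2) ^ s = m ^ (2 * s) := by
    rw [← Real.rpow_natCast, ← Real.rpow_mul (by positivity)]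
    norm_num
  rcases le_or_gt 0 s with hs | hs
  · calc (1 + t ^ 2) ^ s ≤ (2 * m ^ 2) ^ s := Real.rpow_le_rpow (by positivity) hupp hs
      _ = 2 ^ s * m ^ (2 * s) := by rw [Real.mul_rpow (by norm_num) (by positivity), hpow]
      _ ≤ _ := by gcongr; exact le_max_right _ _
  · calc (1 + t ^ 2) ^ s ≤ (m ^ 2) ^ s := Real.rpow_le_rpow_of_nonpos (by positivity) hlow hs.le
      _ = 1 * m ^ (2 * s) := by rw [hpow, one_mul]
      _ ≤ _ := by gcongr; exact le_max_left _ _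

lemma rpow_mul_one_add_sq_rpow_le_of_le_one {t : ℝ} (ht₀ : 0 ≤ t) (ht₁ : t ≤ 1) (a s : ℝ) :
    t ^ a * (1 + t ^ 2) ^ s ≤ max 1 (2 ^ s) * t ^ a := by
  have h := one_add_sq_rpow_le ht₀ s
  rw [max_eq_left ht₁, Real.one_rpow, mul_one] at h
  rw [mul_comm]
  exact mul_le_mul_of_nonneg_right h (by positivity)

lemma rpow_mul_one_add_sq_rpow_le_of_one_le {t : ℝ} (ht : 1 ≤ t) (a s : ℝ) :
    t ^ a * (1 + t ^ 2) ^ s ≤ max 1 (2 ^ s) * t ^ (a + 2 * s) := by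
  have h := one_add_sq_rpow_le (zero_le_one.trans ht) s
  rw [max_eq_right ht] at h
  calc t ^ a * (1 + t ^ 2) ^ s ≤ t ^ a * (max 1 (2 ^ s) * t ^ (2 * s)) := by gcongr
    _ = max 1 (2 ^ s) * t ^ (a + 2 * s) := by
      rw [Real.rpow_add (by linarith)]; ring

lemma one_le_two_pow_mul_pow_mul_rpow {X r b : ℝ} {d : ℕ} (hX : 1 ≤ X) (hr : X / 2 ≤ r)
    (hb : -(d : ℝ) ≤ b) : 1 ≤ 2 ^ d * (r ^ d * X ^ b) :=
  calc 1 ≤ X ^ ((d : ℝ) + b) := Real.one_le_rpow hX (by linarith)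
    _ = X ^ d * X ^ b := by rw [Real.rpow_add (by linarith), Real.rpow_natCast]
    _ ≤ (2 * r) ^ d * X ^ b := by gcongr; linarith
    _ = 2 ^ d * (r ^ d * X ^ b) := by ring

lemma three_mul_rpow_le {X r b : ℝ} {d : ℕ} (hX : 0 < X) (hr : X / 2 ≤ r) (hb : b ≤ 0) :
    (3 * r) ^ ((d : ℝ) + b) ≤ 3 ^ ((d : ℝ) + b) * 2 ^ (-b) * (r ^ d * X ^ b) := by
  have hr₀ : 0 < r := by linarith
  have hrb : r ^ b ≤ 2 ^ (-b) * X ^ b := by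
    calc r ^ b ≤ (X / 2) ^ b := Real.rpow_le_rpow_of_nonpos (by positivity) hr hb
      _ = 2 ^ (-b) * X ^ b := by
        rw [Real.div_rpow hX.le zero_le_two, Real.rpow_neg zero_le_two, div_eq_inv_mul]
  calc (3 * r) ^ ((d : ℝ) + b) = 3 ^ ((d : ℝ) + b) * (r ^ d * r ^ b) := by
        rw [Real.mul_rpow zero_le_three hr₀.le, Real.rpow_add hr₀, Real.rpow_natCast]
    _ ≤ 3 ^ ((d : ℝ) + b) * (r ^ d * (2 ^ (-b) * X ^ b)) := by gcongr
    _ = 3 ^ ((d : ℝ) + b) * 2 ^ (-b) * (r ^ d * X ^ b) := by ring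

lemma MeasureTheory.LocallyIntegrable.integrableOn_of_isBounded {X F : Type*} [PseudoMetricSpace X]
    [ProperSpace X] [MeasurableSpace X] {μ : Measure X} [NormedAddCommGroup F] {f : X → F}
    (hf : LocallyIntegrable f μ) {s : Set X} (hs : Bornology.IsBounded s) :
    IntegrableOn f s μ :=
  (hf.integrableOn_isCompact hs.isCompact_closure).mono_set subset_closure

section HaarMeasure

variable {E : Type*} [NormedAddCommGroup E] [NormedSpace ℝ E] [FiniteDimensional ℝ E]
  [MeasurableSpace E] [BorelSpace E] (μ : Measure E) [μ.IsAddHaarMeasure]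

lemma setIntegral_ball_norm_rpow {R : ℝ} (hR : 0 < R) (p : ℝ) :
    ∫ y in ball (0 : E) R, ‖y‖ ^ p ∂μ =
      R ^ ((finrank ℝ E : ℝ) + p) * ∫ y in ball (0 : E) 1, ‖y‖ ^ p ∂μ := by
  have h := Measure.setIntegral_comp_smul_of_pos μ (fun y : E => ‖y‖ ^ p) (ball 0 1) hR
  simp only [norm_smul, Real.norm_of_nonneg hR.le, smul_unitBall_of_pos hR, smul_eq_mul] at h
  simp_rw [Real.mul_rpow hR.le (norm_nonneg _)] at h
  rw [integral_const_mul] at h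
  rw [Real.rpow_add hR, Real.rpow_natCast, mul_assoc, h, ← mul_assoc,
    mul_inv_cancel₀ (by positivity), one_mul]

lemma locallyIntegrable_norm_rpow (hd : 1 ≤ finrank ℝ E) {p : ℝ}
    (hp : -(finrank ℝ E : ℝ) < p) : LocallyIntegrable (fun y : E => ‖y‖ ^ p) μ :=
  locallyIntegrable_of_norm_le_rpow (α := -p) hd (by linarith)
    (ae_of_all _ fun y => by
      rw [neg_neg, one_mul, Real.norm_of_nonneg (by positivity)])
    (by fun_prop : Measurable fun y : E => ‖y‖ ^ p).aestronglyMeasurable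

lemma setIntegral_norm_rpow_le_of_subset_ball (hd : 1 ≤ finrank ℝ E) {b : ℝ}
    (hb : -(finrank ℝ E : ℝ) < b) (hb₀ : b ≤ 0) {x : E} (hx : 0 < ‖x‖) {r : ℝ}
    (hr : ‖x‖ / 2 ≤ r) {s : Set E} (hs : s ⊆ ball x r) :
    ∫ y in s, ‖y‖ ^ b ∂μ ≤
      3 ^ ((finrank ℝ E : ℝ) + b) * 2 ^ (-b) * (∫ y in ball (0 : E) 1, ‖y‖ ^ b ∂μ) *
        (r ^ finrank ℝ E * ‖x‖ ^ b) := by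
  have hr₀ : 0 < r := by linarith
  have hball : ball x r ⊆ ball (0 : E) (3 * r) :=
    ball_subset_ball' (by rw [dist_zero_right]; linarith)
  have hK : 0 ≤ ∫ y in ball (0 : E) 1, ‖y‖ ^ b ∂μ :=
    setIntegral_nonneg measurableSet_ball fun y _ => by positivity
  calc ∫ y in s, ‖y‖ ^ b ∂μ ≤ ∫ y in ball (0 : E) (3 * r), ‖y‖ ^ b ∂μ :=
        setIntegral_mono_set
          ((locallyIntegrable_norm_rpow μ hd hb).integrableOn_of_isBounded isBounded_ball)
          (ae_of_all _ fun y => by positivity) (hs.trans hball).eventuallyLE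
    _ = (3 * r) ^ ((finrank ℝ E : ℝ) + b) * ∫ y in ball (0 : E) 1, ‖y‖ ^ b ∂μ :=
        setIntegral_ball_norm_rpow μ (by positivity) b
    _ ≤ _ := by
        rw [mul_right_comm _ _ (r ^ finrank ℝ E * ‖x‖ ^ b)]
        exact mul_le_mul_of_nonneg_right (three_mul_rpow_le hx hr hb₀) hK

lemma setIntegral_rpow_mul_one_add_sq_rpow_le (hd : 1 ≤ finrank ℝ E) {a s : ℝ}
    (ha : -(finrank ℝ E : ℝ) < a) (has : -(finrank ℝ E : ℝ) < a + 2 * s) {t : Set E}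
    (ht : MeasurableSet t) (ht' : Bornology.IsBounded t) :
    ∫ y in t, ‖y‖ ^ a * (1 + ‖y‖ ^ 2) ^ s ∂μ ≤
      max 1 (2 ^ s) * ((∫ y in ball (0 : E) 1, ‖y‖ ^ a ∂μ) +
        ∫ y in t \ ball (0 : E) 1, ‖y‖ ^ (a + 2 * s) ∂μ) := by
  set A : ℝ := max 1 (2 ^ s)
  have hA : 0 ≤ A := zero_le_one.trans (le_max_left _ _)
  have hsmall : ∀ y ∈ ball (0 : E) 1, ‖y‖ ^ a * (1 + ‖y‖ ^ 2) ^ s ≤ A * ‖y‖ ^ a := fun y hy =>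
    rpow_mul_one_add_sq_rpow_le_of_le_one (norm_nonneg y) (mem_ball_zero_iff.mp hy).le a s
  have hlarge : ∀ y ∈ (ball (0 : E) 1)ᶜ,
      ‖y‖ ^ a * (1 + ‖y‖ ^ 2) ^ s ≤ A * ‖y‖ ^ (a + 2 * s) := fun y hy =>
    rpow_mul_one_add_sq_rpow_le_of_one_le (by simpa using hy) a s
  have hloca := locallyIntegrable_norm_rpow μ hd ha
  have hlocas := locallyIntegrable_norm_rpow μ hd has
  have hw : LocallyIntegrable (fun y : E => ‖y‖ ^ a * (1 + ‖y‖ ^ 2) ^ s) μ := by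
    refine ((hloca.add hlocas).smul A).mono (by fun_prop : Measurable _).aestronglyMeasurable
      (ae_of_all _ fun y => ?_)
    simp only [Pi.smul_apply, Pi.add_apply, smul_eq_mul]
    have ha₀ : 0 ≤ ‖y‖ ^ a := by positivity
    have has₀ : 0 ≤ ‖y‖ ^ (a + 2 * s) := by positivity
    rw [Real.norm_of_nonneg (by positivity), Real.norm_of_nonneg (by positivity)]
    by_cases hy : y ∈ ball (0 : E) 1
    · nlinarith [hsmall y hy]
    · nlinarith [hlarge y hy]
  calc ∫ y in t, ‖y‖ ^ a * (1 + ‖y‖ ^ 2) ^ s ∂μ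
      = (∫ y in t ∩ ball (0 : E) 1, ‖y‖ ^ a * (1 + ‖y‖ ^ 2) ^ s ∂μ) +
          ∫ y in t \ ball (0 : E) 1, ‖y‖ ^ a * (1 + ‖y‖ ^ 2) ^ s ∂μ :=
        (integral_inter_add_sdiff measurableSet_ball (hw.integrableOn_of_isBounded ht')).symm
    _ ≤ (∫ y in t ∩ ball (0 : E) 1, A * ‖y‖ ^ a ∂μ) +
          ∫ y in t \ ball (0 : E) 1, A * ‖y‖ ^ (a + 2 * s) ∂μ := by
        gcongr ?_ + ?_
        · exact setIntegral_mono_on (hw.integrableOn_of_isBounded (ht'.subset inter_subset_left))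
            ((hloca.integrableOn_of_isBounded (ht'.subset inter_subset_left)).const_mul A)
            (ht.inter measurableSet_ball) fun y hy => hsmall y hy.2
        · exact setIntegral_mono_on (hw.integrableOn_of_isBounded (ht'.subset sdiff_subset))
            ((hlocas.integrableOn_of_isBounded (ht'.subset sdiff_subset)).const_mul A)
            (ht.diff measurableSet_ball) fun y hy => hlarge y hy.2
    _ ≤ A * ((∫ y in ball (0 : E) 1, ‖y‖ ^ a ∂μ) +
          ∫ y in t \ ball (0 : E) 1, ‖y‖ ^ (a + 2 * s) ∂μ) := by
        rw [integral_const_mul, integral_const_mul, ← mul_add]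
        gcongr
        · exact ae_of_all _ fun y => by positivity
        · exact hloca.integrableOn_of_isBounded isBounded_ball
        · exact inter_subset_right

theorem exists_setIntegral_ball_weight_le (hd : 1 ≤ finrank ℝ E) {a s b : ℝ}
    (ha : -(finrank ℝ E : ℝ) < a) (hb : -(finrank ℝ E : ℝ) < b) (hb₀ : b ≤ 0)
    (hab : a + 2 * s = b) :
    ∃ C > 0, ∀ x : E, 1 ≤ ‖x‖ → ∀ r : ℝ, ‖x‖ / 2 ≤ r →
      ∫ y in ball x r, ‖y‖ ^ a * (1 + ‖y‖ ^ 2) ^ s ∂μ ≤ C * r ^ finrank ℝ E * ‖x‖ ^ b ∧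
      ∫ y in ball (0 : E) 1, ‖y‖ ^ a ∂μ ≤ C * r ^ finrank ℝ E * ‖x‖ ^ b ∧
      ∫ y in ball x r \ ball (0 : E) 1, ‖y‖ ^ b ∂μ ≤ C * r ^ finrank ℝ E * ‖x‖ ^ b := by
  set d := finrank ℝ E
  set Ka := ∫ y in ball (0 : E) 1, ‖y‖ ^ a ∂μ
  set Cb := 3 ^ ((d : ℝ) + b) * 2 ^ (-b) * ∫ y in ball (0 : E) 1, ‖y‖ ^ b ∂μ
  have hKa : 0 ≤ Ka := setIntegral_nonneg measurableSet_ball fun y _ => by positivity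
  have hCb : 0 ≤ Cb :=
    mul_nonneg (by positivity) (setIntegral_nonneg measurableSet_ball fun y _ => by positivity)
  set A : ℝ := max 1 (2 ^ s)
  have hA : 1 ≤ A := le_max_left _ _
  refine ⟨A * (2 ^ d * Ka + Cb + 1), mul_pos (by positivity) (by positivity),
    fun x hx r hr => ?_⟩
  have hr₀ : 0 ≤ r := by linarith
  set X := r ^ d * ‖x‖ ^ b
  have hX : 0 ≤ X := by positivity
  have hball : Ka ≤ 2 ^ d * Ka * X := by
    have := one_le_two_pow_mul_pow_mul_rpow hx hr hb.le
    nlinarith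
  have hsdiff : ∫ y in ball x r \ ball 0 1, ‖y‖ ^ b ∂μ ≤ Cb * X :=
    setIntegral_norm_rpow_le_of_subset_ball μ hd hb hb₀ (by linarith) hr sdiff_subset
  have hweight := setIntegral_rpow_mul_one_add_sq_rpow_le μ hd ha (hab ▸ hb)
    measurableSet_ball (isBounded_ball (x := x) (r := r))
  rw [hab] at hweight
  rw [mul_assoc _ (r ^ d)]
  have hKaX : 0 ≤ 2 ^ d * Ka * X := mul_nonneg (mul_nonneg (by positivity) hKa) hX
  have hCbX : 0 ≤ Cb * X := mul_nonneg hCb hX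
  refine ⟨?_, by nlinarith, by nlinarith⟩
  calc _ ≤ A * (Ka + ∫ y in ball x r \ ball 0 1, ‖y‖ ^ b ∂μ) := hweight
    _ ≤ A * ((2 ^ d * Ka + Cb) * X) := by gcongr; linarith
    _ ≤ A * (2 ^ d * Ka + Cb + 1) * X := by nlinarith

end HaarMeasure

theorem stmt_15_general (n : ℕ) (δ δ₁ : ℝ) (hδ : 0 < δ)
    (h1 : 0 ≤ 1 + 2 * δ₁) (h2 : 1 + 2 * δ₁ < (n : ℝ)) :
    ∃ C > 0, ∀ x : EuclideanSpace ℝ (Fin n), 1 ≤ ‖x‖ → ∀ r : ℝ, ‖x‖ / 2 ≤ r →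
      (∫ y in Metric.ball x r,
          ‖y‖ ^ (-1 + 2 * δ) * (1 + ‖y‖ ^ 2) ^ ((-2 * δ - 2 * δ₁) / 2)) ≤
        C * r ^ n * ‖x‖ ^ (-1 - 2 * δ₁) ∧
      (∫ y in Metric.ball (0 : EuclideanSpace ℝ (Fin n)) 1, ‖y‖ ^ (-1 + 2 * δ)) ≤
        C * r ^ n * ‖x‖ ^ (-1 - 2 * δ₁) ∧
      (∫ y in Metric.ball x r \ Metric.ball (0 : EuclideanSpace ℝ (Fin n)) 1,
          ‖y‖ ^ (-1 - 2 * δ₁)) ≤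
        C * r ^ n * ‖x‖ ^ (-1 - 2 * δ₁) := by
  have hdim : finrank ℝ (EuclideanSpace ℝ (Fin n)) = n := finrank_euclideanSpace_fin
  have hn : (1 : ℝ) ≤ n := by exact_mod_cast (show (0 : ℝ) < n by linarith)
  have h := exists_setIntegral_ball_weight_le volume (E := EuclideanSpace ℝ (Fin n))
    (a := -1 + 2 * δ) (s := (-2 * δ - 2 * δ₁) / 2) (b := -1 - 2 * δ₁)
    (by rw [hdim]; exact_mod_cast hn) (by rw [hdim]; linarith) (by rw [hdim]; linarith)
    (by linarith) (by ring)
  rwa [hdim] at h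

/-- Estimate for the weight integral over large balls: for `|x| ≥ 1` and `r ≥ |x|/2`,
`∫_{B_r(x)} |y|^{-1+2δ} ⟨y⟩^{-2δ-2δ₁} dy ≤ C rⁿ |x|^{-1-2δ₁}`, with each piece of the
splitting `∫_{B_1(0)} |y|^{-1+2δ} + ∫_{B_r(x)\B_1(0)} |y|^{-1-2δ₁}` obeying the same bound. -/
theorem stmt_15 (n : ℕ) (hn : 1 ≤ n) (δ δ₁ : ℝ) (hδ : 0 < δ) (hδ' : δ ≤ 1 / 2)
    (h1 : 0 ≤ 1 + 2 * δ₁) (h2 : 1 + 2 * δ₁ < (n : ℝ)) :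
    ∃ C > 0, ∀ x : EuclideanSpace ℝ (Fin n), 1 ≤ ‖x‖ → ∀ r : ℝ, ‖x‖ / 2 ≤ r →
      (∫ y in Metric.ball x r,
          ‖y‖ ^ (-1 + 2 * δ) * (1 + ‖y‖ ^ 2) ^ ((-2 * δ - 2 * δ₁) / 2)) ≤
        C * r ^ n * ‖x‖ ^ (-1 - 2 * δ₁) ∧
      (∫ y in Metric.ball (0 : EuclideanSpace ℝ (Fin n)) 1, ‖y‖ ^ (-1 + 2 * δ)) ≤
        C * r ^ n * ‖x‖ ^ (-1 - 2 * δ₁) ∧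
      (∫ y in Metric.ball x r \ Metric.ball (0 : EuclideanSpace ℝ (Fin n)) 1,
          ‖y‖ ^ (-1 - 2 * δ₁)) ≤
        C * r ^ n * ‖x‖ ^ (-1 - 2 * δ₁) :=
  stmt_15_general n δ δ₁ hδ h1 h2
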